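/- Under the same hypotheses, if u_Λ → u in L^p(0,T; D) (1 ≤ p < ∞), then A_Λ^L(·)u_Λ(·) → A(·)u(·) in L^p(0,T; X) as |Λ| → 0, where A_Λ^L is the piecewise-linear interpolation of the interval averages of A over a uniform subdivision. -/

import Mathlib

/-!
For fixed `x ∈ D`, `A_Λ^L(t) x` is a convex combination of the averages of `A(·) x` over the grid
cell containing `t` and its right neighbour. Both cells are closed balls of radius `|Λ|/2` at
distance at most `3|Λ|/2` from `t`, so by the Lebesgue differentiation theorem `A_Λ^L(t) x → A(t) x`
for almost every `t`. The operators `A_Λ^L(t)` are bounded by `C` uniformly in `Λ` and `t`, hence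
Vitali's convergence theorem gives `A_Λ^L u → A u` in `L^p` for simple `u`; an `ε/3` argument with
the uniform bound extends this to all `u ∈ L^p`, and then to a moving `u_Λ → u`.
-/

open MeasureTheory Filter intervalIntegral

noncomputable section

variable {X : Type*} [NormedAddCommGroup X] [NormedSpace ℝ X] [CompleteSpace X]

/-- Average of `f` over the `k`-th interval of the uniform subdivision of `[0,T]`
into `n+1` subintervals. -/
def uavg (f : ℝ → X) (T : ℝ) (n k : ℕ) : X :=
  ((n + 1 : ℝ) / T) • ∫ r in ((k : ℝ) * (T / (n + 1)))..(((k : ℝ) + 1) * (T / (n + 1))), f r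

/-- Index of the subinterval containing `t` (clamped to `n`). -/
def uidx (T : ℝ) (n : ℕ) (t : ℝ) : ℕ := min ⌊t * (n + 1) / T⌋₊ n

/-- Piecewise linear interpolation of the interval averages of `f` over the
uniform subdivision of `[0,T]` into `n+1` subintervals. -/
def linApprox (f : ℝ → X) (T : ℝ) (n : ℕ) (t : ℝ) : X :=
  (((uidx T n t + 1 : ℝ) * (T / (n + 1)) - t) / (T / (n + 1))) • uavg f T n (uidx T n t) +
    ((t - (uidx T n t : ℝ) * (T / (n + 1))) / (T / (n + 1))) •
      uavg f T n (min (uidx T n t + 1) n)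

/-- The piecewise linear approximation `A_Λ^L(t)x` of a strongly measurable
operator family `A : [0,T] → L(D,X)`, applied to `x ∈ D`. -/
def opLin {D : Type*} [NormedAddCommGroup D] [NormedSpace ℝ D]
    (A : ℝ → D →L[ℝ] X) (T : ℝ) (n : ℕ) (t : ℝ) (x : D) : X :=
  linApprox (fun r => A r x) T n t

open Topology Set

section ClmFamily

variable {α E F : Type*} [MeasurableSpace α] {μ : Measure α}
  [NormedAddCommGroup E] [NormedSpace ℝ E] [NormedAddCommGroup F] [NormedSpace ℝ F]

theorem MeasureTheory.SimpleFunc.aestronglyMeasurable_clm_apply {L : α → E →L[ℝ] F}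
    (hL : ∀ x, AEStronglyMeasurable (fun t => L t x) μ) (s : SimpleFunc α E) :
    AEStronglyMeasurable (fun t => L t (s t)) μ := by
  have hsum : (fun t => L t (s t)) = ∑ y ∈ s.range, (s ⁻¹' {y}).indicator (fun t => L t y) := by
    ext t
    rw [Finset.sum_apply, Finset.sum_eq_single (s t)]
    · simp
    · exact fun y _ hy => indicator_of_notMem (Ne.symm hy) _
    · exact fun h => absurd (s.mem_range_self t) h
  rw [hsum]
  exact Finset.aestronglyMeasurable_sum _ fun y _ => (hL y).indicator (s.measurableSet_preimage _)

theorem aestronglyMeasurable_clm_apply {L : α → E →L[ℝ] F}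
    (hL : ∀ x, AEStronglyMeasurable (fun t => L t x) μ) {v : α → E}
    (hv : AEStronglyMeasurable v μ) : AEStronglyMeasurable (fun t => L t (v t)) μ := by
  obtain ⟨w, hw, hvw⟩ := hv
  refine (aestronglyMeasurable_of_tendsto_ae atTop
    (fun k => (hw.approx k).aestronglyMeasurable_clm_apply hL)
    (ae_of_all _ fun t => ((L t).continuous.tendsto _).comp (hw.tendsto_approx t))).congr ?_
  filter_upwards [hvw] with t ht
  rw [ht]

theorem eLpNorm_clm_apply_le {L : α → E →L[ℝ] F} {C : ℝ} (hL : ∀ᵐ t ∂μ, ∀ x, ‖L t x‖ ≤ C * ‖x‖)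
    (v : α → E) (p : ENNReal) :
    eLpNorm (fun t => L t (v t)) p μ ≤ ENNReal.ofReal C * eLpNorm v p μ :=
  eLpNorm_le_mul_eLpNorm_of_ae_le_mul (hL.mono fun t ht => ht (v t)) p

theorem unifIntegrable_of_ae_norm_le {ι G : Type*} [NormedAddCommGroup G] {f : ι → α → G}
    {p : ENNReal} (hp1 : 1 ≤ p) (hp : p ≠ ⊤) (hf : ∀ i, AEStronglyMeasurable (f i) μ) {M : ℝ}
    (hM : ∀ i, ∀ᵐ t ∂μ, ‖f i t‖ ≤ M) : UnifIntegrable f p μ := by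
  refine unifIntegrable_of hp1 hp hf fun ε hε => ⟨M.toNNReal + 1, fun i => ?_⟩
  have hzero : {t | M.toNNReal + 1 ≤ ‖f i t‖₊}.indicator (f i) =ᵐ[μ] 0 := by
    filter_upwards [hM i] with t ht
    refine indicator_of_notMem (fun h => ?_) _
    have h' : (M.toNNReal : ℝ) + 1 ≤ ‖f i t‖ := by exact_mod_cast (h : M.toNNReal + 1 ≤ ‖f i t‖₊)
    linarith [M.le_coe_toNNReal]
  rw [eLpNorm_congr_ae hzero, eLpNorm_zero]
  exact zero_le

variable [IsFiniteMeasure μ] {p : ENNReal} {L : ℕ → α → E →L[ℝ] F} {A : α → E →L[ℝ] F} {C : ℝ}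

theorem tendsto_eLpNorm_clm_apply_sub_simpleFunc (hp1 : 1 ≤ p) (hp : p ≠ ⊤)
    (hLm : ∀ n x, AEStronglyMeasurable (fun t => L n t x) μ)
    (hAm : ∀ x, AEStronglyMeasurable (fun t => A t x) μ)
    (hLb : ∀ n, ∀ᵐ t ∂μ, ∀ x, ‖L n t x‖ ≤ C * ‖x‖) (hAb : ∀ᵐ t ∂μ, ∀ x, ‖A t x‖ ≤ C * ‖x‖)
    (hlim : ∀ x, ∀ᵐ t ∂μ, Tendsto (fun n => L n t x) atTop (𝓝 (A t x))) (s : SimpleFunc α E) :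
    Tendsto (fun n => eLpNorm (fun t => L n t (s t) - A t (s t)) p μ) atTop (𝓝 0) := by
  obtain ⟨M, hM⟩ := s.exists_forall_norm_le
  have hbound : ∀ x : E, ‖x‖ ≤ M → C * ‖x‖ ≤ |C| * M := fun x hx =>
    mul_le_mul (le_abs_self C) hx (norm_nonneg x) (abs_nonneg C)
  have hAs : MemLp (fun t => A t (s t)) p μ :=
    .of_bound (s.aestronglyMeasurable_clm_apply hAm) _
      (hAb.mono fun t ht => (ht _).trans (hbound _ (hM t)))
  refine tendsto_Lp_finite_of_tendsto_ae hp1 hp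
    (fun n => s.aestronglyMeasurable_clm_apply (hLm n)) hAs
    (unifIntegrable_of_ae_norm_le hp1 hp (fun n => s.aestronglyMeasurable_clm_apply (hLm n))
      fun n => (hLb n).mono fun t ht => (ht _).trans (hbound _ (hM t))) ?_
  have hrange : ∀ᵐ t ∂μ, ∀ y ∈ s.range, Tendsto (fun n => L n t y) atTop (𝓝 (A t y)) :=
    (eventually_all_finset _).2 fun y _ => hlim y
  filter_upwards [hrange] with t ht
  exact ht _ (s.mem_range_self t)

theorem tendsto_eLpNorm_clm_apply_sub (hp1 : 1 ≤ p) (hp : p ≠ ⊤)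
    (hLm : ∀ n x, AEStronglyMeasurable (fun t => L n t x) μ)
    (hAm : ∀ x, AEStronglyMeasurable (fun t => A t x) μ)
    (hLb : ∀ n, ∀ᵐ t ∂μ, ∀ x, ‖L n t x‖ ≤ C * ‖x‖) (hAb : ∀ᵐ t ∂μ, ∀ x, ‖A t x‖ ≤ C * ‖x‖)
    (hlim : ∀ x, ∀ᵐ t ∂μ, Tendsto (fun n => L n t x) atTop (𝓝 (A t x)))
    {u : α → E} (hu : MemLp u p μ) :
    Tendsto (fun n => eLpNorm (fun t => L n t (u t) - A t (u t)) p μ) atTop (𝓝 0) := by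
  rw [ENNReal.tendsto_nhds_zero]
  intro ε hε
  obtain ⟨δ, hδ, hδε⟩ := ENNReal.exists_pos_mul_lt (a := 2 * ENNReal.ofReal C) (b := ε / 2)
    (by finiteness) (ENNReal.half_pos hε.ne').ne'
  obtain ⟨s, hs, -⟩ := hu.exists_simpleFunc_eLpNorm_sub_lt hp hδ.ne'
  filter_upwards [ENNReal.tendsto_nhds_zero.1 (tendsto_eLpNorm_clm_apply_sub_simpleFunc hp1 hp
    hLm hAm hLb hAb hlim s) (ε / 2) (ENNReal.half_pos hε.ne')] with n hn
  have hus : AEStronglyMeasurable (fun t => u t - s t) μ :=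
    hu.1.sub s.aestronglyMeasurable
  have hsplit : (fun t => L n t (u t) - A t (u t)) = fun t =>
      L n t (u t - s t) + (L n t (s t) - A t (s t)) - A t (u t - s t) := by
    ext t
    simp only [map_sub]
    abel
  have hLus := aestronglyMeasurable_clm_apply (hLm n) hus
  have hLAs := (s.aestronglyMeasurable_clm_apply (hLm n)).sub
    (s.aestronglyMeasurable_clm_apply hAm)
  have hCus : ENNReal.ofReal C * eLpNorm (fun t => u t - s t) p μ ≤ ENNReal.ofReal C * δ := by
    gcongr
    exact hs.le
  rw [hsplit]
  calc _ ≤ eLpNorm (fun t => L n t (u t - s t)) p μ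
        + eLpNorm (fun t => L n t (s t) - A t (s t)) p μ
        + eLpNorm (fun t => A t (u t - s t)) p μ :=
        (eLpNorm_sub_le (hLus.add hLAs) (aestronglyMeasurable_clm_apply hAm hus) hp1).trans
          (add_le_add_left (eLpNorm_add_le hLus hLAs hp1) _)
    _ ≤ ENNReal.ofReal C * δ + ε / 2 + ENNReal.ofReal C * δ := by
        gcongr
        · exact (eLpNorm_clm_apply_le (hLb n) _ p).trans hCus
        · exact (eLpNorm_clm_apply_le hAb _ p).trans hCus
    _ = 2 * ENNReal.ofReal C * δ + ε / 2 := by ring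
    _ ≤ ε / 2 + ε / 2 := by gcongr; rw [mul_comm]; exact hδε.le
    _ = ε := ENNReal.add_halves ε

theorem tendsto_eLpNorm_clm_apply_sub_of_tendsto (hp1 : 1 ≤ p) (hp : p ≠ ⊤)
    (hLm : ∀ n x, AEStronglyMeasurable (fun t => L n t x) μ)
    (hAm : ∀ x, AEStronglyMeasurable (fun t => A t x) μ)
    (hLb : ∀ n, ∀ᵐ t ∂μ, ∀ x, ‖L n t x‖ ≤ C * ‖x‖) (hAb : ∀ᵐ t ∂μ, ∀ x, ‖A t x‖ ≤ C * ‖x‖)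
    (hlim : ∀ x, ∀ᵐ t ∂μ, Tendsto (fun n => L n t x) atTop (𝓝 (A t x)))
    {u : α → E} {v : ℕ → α → E} (hu : MemLp u p μ) (hv : ∀ n, AEStronglyMeasurable (v n) μ)
    (hvu : Tendsto (fun n => eLpNorm (fun t => v n t - u t) p μ) atTop (𝓝 0)) :
    Tendsto (fun n => eLpNorm (fun t => L n t (v n t) - A t (u t)) p μ) atTop (𝓝 0) := by
  have hbound : ∀ n, eLpNorm (fun t => L n t (v n t) - A t (u t)) p μ ≤
      ENNReal.ofReal C * eLpNorm (fun t => v n t - u t) p μ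
        + eLpNorm (fun t => L n t (u t) - A t (u t)) p μ := by
    intro n
    have hsplit : (fun t => L n t (v n t) - A t (u t)) = fun t =>
        L n t (v n t - u t) + (L n t (u t) - A t (u t)) := by
      ext t
      simp only [map_sub]
      abel
    rw [hsplit]
    refine (eLpNorm_add_le (aestronglyMeasurable_clm_apply (hLm n) ((hv n).sub hu.1))
      ((aestronglyMeasurable_clm_apply (hLm n) hu.1).sub (aestronglyMeasurable_clm_apply hAm hu.1))
      hp1).trans ?_
    exact add_le_add_left (eLpNorm_clm_apply_le (hLb n) _ p) _
  have hlimit := (ENNReal.Tendsto.const_mul hvu (.inr (ENNReal.ofReal_ne_top (r := C)))).add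
    (tendsto_eLpNorm_clm_apply_sub hp1 hp hLm hAm hLb hAb hlim hu)
  rw [mul_zero, add_zero] at hlimit
  exact tendsto_of_tendsto_of_tendsto_of_le_of_le tendsto_const_nhds hlimit (fun _ => zero_le)
    hbound

end ClmFamily

section Grid

variable {E : Type*} [NormedAddCommGroup E] [NormedSpace ℝ E] {T t : ℝ} {n k : ℕ} {f : ℝ → E}

theorem uidx_le : uidx T n t ≤ n := min_le_right _ _

theorem uidx_mul_le_and_le_succ_mul (hT : 0 < T) (ht : t ∈ Icc 0 T) :
    (uidx T n t : ℝ) * (T / (n + 1)) ≤ t ∧ t ≤ (uidx T n t + 1) * (T / (n + 1)) := by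
  have hh : 0 < T / (n + 1) := by positivity
  have hq : t * (n + 1) / T = t / (T / (n + 1)) := by field_simp
  have hq0 : 0 ≤ t / (T / (n + 1)) := div_nonneg ht.1 hh.le
  have hqn : t / (T / (n + 1)) ≤ n + 1 := by
    rw [div_le_iff₀ hh]; field_simp; nlinarith [ht.2]
  rw [← le_div_iff₀ hh, ← div_le_iff₀ hh]
  simp only [uidx, hq, Nat.cast_min]
  constructor
  · exact (min_le_left _ _).trans (Nat.floor_le hq0)
  · rw [← min_add_add_right]
    exact le_min (Nat.lt_floor_add_one _).le hqn

theorem mul_mesh_le_succ_mul_mesh (hT : 0 ≤ T) :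
    (k : ℝ) * (T / (n + 1)) ≤ (k + 1) * (T / (n + 1)) := by
  gcongr
  linarith

theorem Icc_cell_subset (hT : 0 < T) (hk : k ≤ n) :
    Icc ((k : ℝ) * (T / (n + 1))) ((k + 1) * (T / (n + 1))) ⊆ Icc 0 T := by
  have hkn : (k : ℝ) + 1 ≤ n + 1 := by exact_mod_cast Nat.succ_le_succ hk
  refine Icc_subset_Icc (by positivity) ?_
  calc ((k : ℝ) + 1) * (T / (n + 1)) ≤ (n + 1) * (T / (n + 1)) := by gcongr
    _ = T := by field_simp

theorem norm_linApprox_sub_le (hT : 0 < T) (ht : t ∈ Icc 0 T) (z : E) :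
    ‖linApprox f T n t - z‖ ≤
      max ‖uavg f T n (uidx T n t) - z‖ ‖uavg f T n (min (uidx T n t + 1) n) - z‖ := by
  obtain ⟨hlo, hhi⟩ := uidx_mul_le_and_le_succ_mul (n := n) hT ht
  have hh : 0 < T / (n + 1) := by positivity
  set a := uavg f T n (uidx T n t)
  set b := uavg f T n (min (uidx T n t + 1) n)
  set c₁ := (((uidx T n t : ℝ) + 1) * (T / (n + 1)) - t) / (T / (n + 1))
  set c₂ := (t - (uidx T n t : ℝ) * (T / (n + 1))) / (T / (n + 1))
  have hc₁ : 0 ≤ c₁ := div_nonneg (by linarith) hh.le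
  have hc₂ : 0 ≤ c₂ := div_nonneg (by linarith) hh.le
  have hsum : c₁ + c₂ = 1 := by rw [← add_div, div_eq_one_iff_eq hh.ne']; ring
  have hcomb : linApprox f T n t - z = c₁ • (a - z) + c₂ • (b - z) := by
    rw [smul_sub, smul_sub, sub_add_sub_comm, ← add_smul, hsum, one_smul]
    rfl
  rw [hcomb]
  calc ‖c₁ • (a - z) + c₂ • (b - z)‖ ≤ c₁ * ‖a - z‖ + c₂ * ‖b - z‖ := by
        refine (norm_add_le _ _).trans_eq ?_
        rw [norm_smul, norm_smul, Real.norm_of_nonneg hc₁, Real.norm_of_nonneg hc₂]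
    _ ≤ c₁ * max ‖a - z‖ ‖b - z‖ + c₂ * max ‖a - z‖ ‖b - z‖ := by
        gcongr
        exacts [le_max_left _ _, le_max_right _ _]
    _ = max ‖a - z‖ ‖b - z‖ := by rw [← add_mul, hsum, one_mul]

theorem norm_uavg_le (hT : 0 < T) {M : ℝ} (hf : ∀ r ∈ Icc 0 T, ‖f r‖ ≤ M) (hk : k ≤ n) :
    ‖uavg f T n k‖ ≤ M := by
  have hab := mul_mesh_le_succ_mul_mesh (k := k) (n := n) hT.le
  have hint := norm_integral_le_of_norm_le_const (a := (k : ℝ) * (T / (n + 1)))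
    (b := (k + 1) * (T / (n + 1))) fun r hr =>
      hf r (Icc_cell_subset hT hk (Ioc_subset_Icc_self (uIoc_of_le hab ▸ hr)))
  rw [abs_of_nonneg (by linarith)] at hint
  rw [uavg, norm_smul, Real.norm_of_nonneg (by positivity)]
  calc (n + 1 : ℝ) / T * ‖∫ r in (k : ℝ) * (T / (n + 1))..(k + 1) * (T / (n + 1)), f r‖
      ≤ (n + 1) / T * (M * ((k + 1) * (T / (n + 1)) - k * (T / (n + 1)))) := by gcongr
    _ = M := by field_simp; ring

theorem norm_linApprox_le (hT : 0 < T) {M : ℝ} (hf : ∀ r ∈ Icc 0 T, ‖f r‖ ≤ M)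
    (ht : t ∈ Icc 0 T) : ‖linApprox f T n t‖ ≤ M := by
  simpa using (norm_linApprox_sub_le (f := f) (n := n) hT ht 0).trans
    (max_le (by simpa using norm_uavg_le hT hf uidx_le)
      (by simpa using norm_uavg_le hT hf (min_le_right _ _)))

theorem uavg_add {g : ℝ → E} (hT : 0 < T) (hf : IntegrableOn f (Icc 0 T))
    (hg : IntegrableOn g (Icc 0 T)) (hk : k ≤ n) :
    uavg (fun r => f r + g r) T n k = uavg f T n k + uavg g T n k := by
  have hab := mul_mesh_le_succ_mul_mesh (k := k) (n := n) hT.le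
  have hcell := Icc_cell_subset hT hk
  rw [← uIcc_of_le hab] at hcell
  rw [uavg, uavg, uavg, ← smul_add, integral_add ((hf.mono_set hcell).intervalIntegrable)
    ((hg.mono_set hcell).intervalIntegrable)]

theorem uavg_congr {g : ℝ → E} (hT : 0 < T) (hfg : EqOn f g (Icc 0 T)) (hk : k ≤ n) :
    uavg f T n k = uavg g T n k := by
  have hab := mul_mesh_le_succ_mul_mesh (k := k) (n := n) hT.le
  rw [uavg, uavg, integral_congr fun r hr => hfg (Icc_cell_subset hT hk (uIcc_of_le hab ▸ hr))]

theorem linApprox_congr {g : ℝ → E} (hT : 0 < T) (hfg : EqOn f g (Icc 0 T)) :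
    linApprox f T n t = linApprox g T n t := by
  rw [linApprox, linApprox, uavg_congr hT hfg uidx_le, uavg_congr hT hfg (min_le_right _ _)]

theorem measurable_uidx : Measurable (uidx T n) := by
  unfold uidx
  fun_prop

theorem stronglyMeasurable_linApprox : StronglyMeasurable (linApprox f T n) := by
  have hk : Measurable fun t => (uidx T n t : ℝ) := measurable_from_nat.comp measurable_uidx
  have hv (v : ℕ → E) : StronglyMeasurable fun t => v (uidx T n t) :=
    StronglyMeasurable.of_discrete.comp_measurable measurable_uidx
  exact ((Measurable.stronglyMeasurable (by fun_prop)).smul (hv _)).add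
    ((Measurable.stronglyMeasurable (by fun_prop)).smul (hv fun j => uavg f T n (min (j + 1) n)))

theorem uavg_eq_setAverage (hT : 0 < T) :
    uavg f T n k =
      ⨍ r in Metric.closedBall ((k + 1 / 2) * (T / (n + 1))) (T / (n + 1) / 2), f r := by
  have hab := mul_mesh_le_succ_mul_mesh (k := k) (n := n) hT.le
  have hball : Metric.closedBall ((k + 1 / 2) * (T / (n + 1))) (T / (n + 1) / 2) =
      Icc ((k : ℝ) * (T / (n + 1))) ((k + 1) * (T / (n + 1))) := by
    rw [Real.closedBall_eq_Icc]
    congr 1 <;> ring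
  rw [setAverage_eq, hball, integral_Icc_eq_integral_Ioc, ← integral_of_le hab,
    Real.volume_real_Icc_of_le hab, uavg]
  congr 1
  field_simp
  ring

theorem tendsto_mesh_nhdsGT (hT : 0 < T) :
    Tendsto (fun n : ℕ => T / (n + 1) / 2) atTop (𝓝[>] 0) := by
  refine tendsto_nhdsWithin_iff.2 ⟨?_, .of_forall fun n => by simp only [mem_Ioi]; positivity⟩
  simpa [div_eq_mul_one_div T, mul_div_right_comm] using
    (tendsto_one_div_add_atTop_nhds_zero_nat (𝕜 := ℝ)).const_mul (T / 2)

theorem ae_tendsto_uavg [CompleteSpace E] (hT : 0 < T) (hf : LocallyIntegrable f) :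
    ∀ᵐ t, t ∈ Icc 0 T → ∀ j : ℕ → ℕ, (∀ n, uidx T n t ≤ j n ∧ j n ≤ uidx T n t + 1) →
      Tendsto (fun n => uavg f T n (j n)) atTop (𝓝 (f t)) := by
  filter_upwards [IsUnifLocDoublingMeasure.ae_tendsto_average volume hf 3] with t hlim ht j hj
  simp_rw [uavg_eq_setAverage hT]
  refine hlim _ _ (tendsto_mesh_nhdsGT hT) (.of_forall fun n => ?_)
  obtain ⟨hlo, hhi⟩ := uidx_mul_le_and_le_succ_mul (n := n) hT ht
  have hj₁ : (uidx T n t : ℝ) ≤ j n := by exact_mod_cast (hj n).1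
  have hj₂ : (j n : ℝ) ≤ uidx T n t + 1 := by exact_mod_cast (hj n).2
  rw [Metric.mem_closedBall, Real.dist_eq, abs_le]
  constructor <;> nlinarith

theorem ae_tendsto_linApprox [CompleteSpace E] (hT : 0 < T) (hf : IntegrableOn f (Icc 0 T)) :
    ∀ᵐ t ∂volume.restrict (Ioc 0 T), Tendsto (fun n => linApprox f T n t) atTop (𝓝 (f t)) := by
  set g := (Icc 0 T).indicator f
  have hg : LocallyIntegrable g :=
    ((integrable_indicator_iff measurableSet_Icc).2 hf).locallyIntegrable
  have hfg : EqOn f g (Icc 0 T) := fun r hr => (indicator_of_mem hr f).symm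
  rw [ae_restrict_iff' measurableSet_Ioc]
  filter_upwards [ae_tendsto_uavg hT hg] with t hlim ht
  have ht' := Ioc_subset_Icc_self ht
  have h₁ := hlim ht' (fun n => uidx T n t) fun n => ⟨le_rfl, Nat.le_succ _⟩
  have h₂ := hlim ht' (fun n => min (uidx T n t + 1) n) fun n =>
    ⟨le_min (Nat.le_succ _) uidx_le, min_le_left _ _⟩
  rw [tendsto_iff_norm_sub_tendsto_zero] at h₁ h₂ ⊢
  refine squeeze_zero (fun n => norm_nonneg _) (fun n => ?_) (by simpa using h₁.max h₂)
  rw [linApprox_congr hT hfg, hfg ht']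
  exact norm_linApprox_sub_le hT ht' _

end Grid

section Operator

variable {D E : Type*} [NormedAddCommGroup D] [NormedSpace ℝ D] [NormedAddCommGroup E]
  [NormedSpace ℝ E] {A : ℝ → D →L[ℝ] E} {T C : ℝ} {n k : ℕ}

theorem exists_clm_eq_uavg (hT : 0 < T) (hA : ∀ x, IntegrableOn (fun r => A r x) (Icc 0 T))
    (hbd : ∀ r ∈ Icc 0 T, ∀ x, ‖A r x‖ ≤ C * ‖x‖) (hk : k ≤ n) :
    ∃ B : D →L[ℝ] E, ∀ x, B x = uavg (fun r => A r x) T n k := by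
  refine ⟨(AddMonoidHom.mk' (fun x => uavg (fun r => A r x) T n k) fun x y => ?_).toRealLinearMap
    (AddMonoidHomClass.continuous_of_bound _ C fun x =>
      norm_uavg_le hT (fun r hr => hbd r hr x) hk),
    fun _ => rfl⟩
  simpa only [map_add] using uavg_add hT (hA x) (hA y) hk

theorem exists_clm_eq_opLin (hT : 0 < T) (hA : ∀ x, IntegrableOn (fun r => A r x) (Icc 0 T))
    (hbd : ∀ r ∈ Icc 0 T, ∀ x, ‖A r x‖ ≤ C * ‖x‖) (n : ℕ) (t : ℝ) :
    ∃ L : D →L[ℝ] E, ∀ x, L x = opLin A T n t x := by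
  obtain ⟨B₁, hB₁⟩ := exists_clm_eq_uavg hT hA hbd (uidx_le (n := n) (T := T) (t := t))
  obtain ⟨B₂, hB₂⟩ := exists_clm_eq_uavg hT hA hbd (min_le_right (uidx T n t + 1) n)
  refine ⟨((((uidx T n t : ℝ) + 1) * (T / (n + 1)) - t) / (T / (n + 1))) • B₁ +
    ((t - (uidx T n t : ℝ) * (T / (n + 1))) / (T / (n + 1))) • B₂, fun x => ?_⟩
  rw [add_apply, smul_apply, smul_apply, hB₁, hB₂]
  rfl

end Operator

theorem opLin_apply_tendsto_Lp_general
    {D : Type*} [NormedAddCommGroup D] [NormedSpace ℝ D]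
    (T : ℝ) (hT : 0 < T) (A : ℝ → D →L[ℝ] X)
    (hmeas : ∀ x : D, StronglyMeasurable fun t => A t x)
    (C : ℝ) (hbd : ∀ t ∈ Set.Icc (0 : ℝ) T, ∀ x : D, ‖A t x‖ ≤ C * ‖x‖)
    (p : ENNReal) (hp1 : 1 ≤ p) (hp : p ≠ ⊤)
    (u : ℝ → D) (uΛ : ℕ → ℝ → D)
    (hu : MemLp u p (volume.restrict (Set.Ioc 0 T)))
    (huΛ : ∀ n, MemLp (uΛ n) p (volume.restrict (Set.Ioc 0 T)))
    (hconv : Tendsto (fun n => eLpNorm (fun t => uΛ n t - u t) p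
        (volume.restrict (Set.Ioc 0 T))) atTop (nhds 0)) :
    Tendsto (fun n => eLpNorm (fun t => opLin A T n t (uΛ n t) - A t (u t)) p
        (volume.restrict (Set.Ioc 0 T))) atTop (nhds 0) := by
  have hint (x : D) : IntegrableOn (fun t => A t x) (Icc 0 T) :=
    Measure.integrableOn_of_bounded measure_Icc_lt_top.ne (hmeas x).aestronglyMeasurable
      ((ae_restrict_iff' measurableSet_Icc).2 (.of_forall fun t ht => hbd t ht x))
  choose L hL using exists_clm_eq_opLin hT hint hbd
  simp only [← hL]
  refine tendsto_eLpNorm_clm_apply_sub_of_tendsto hp1 hp (fun n x => ?_)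
    (fun x => (hmeas x).aestronglyMeasurable) (fun n => ?_)
    (ae_restrict_of_forall_mem measurableSet_Ioc fun t ht => hbd t (Ioc_subset_Icc_self ht))
    (fun x => ?_) hu (fun n => (huΛ n).1) hconv
  · simp only [hL]
    exact stronglyMeasurable_linApprox.aestronglyMeasurable
  · refine ae_restrict_of_forall_mem measurableSet_Ioc fun t ht x => ?_
    rw [hL]
    exact norm_linApprox_le hT (fun r hr => hbd r hr x) (Ioc_subset_Icc_self ht)
  · simp only [hL]
    exact ae_tendsto_linApprox hT (hint x)

/-- Let `D ↪ X` be a continuous dense embedding of Banach spaces and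
`A : [0,T] → L(D,X)` bounded and strongly measurable.  If `u_Λ → u` in
`L^p(0,T;D)`, then `A_Λ^L(·)u_Λ(·) → A(·)u(·)` in `L^p(0,T;X)` as the mesh of
the uniform subdivision `Λ` tends to `0`, where `A_Λ^L` is the piecewise linear
interpolation of the interval averages of `A`. -/
theorem opLin_apply_tendsto_Lp
    {D : Type*} [NormedAddCommGroup D] [NormedSpace ℝ D] [CompleteSpace D]
    (ι : D →L[ℝ] X) (hinj : Function.Injective ι) (hdense : DenseRange ι)
    (T : ℝ) (hT : 0 < T) (A : ℝ → D →L[ℝ] X)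
    (hmeas : ∀ x : D, StronglyMeasurable fun t => A t x)
    (C : ℝ) (hbd : ∀ t ∈ Set.Icc (0 : ℝ) T, ∀ x : D, ‖A t x‖ ≤ C * ‖x‖)
    (p : ENNReal) (hp1 : 1 ≤ p) (hp : p ≠ ⊤)
    (u : ℝ → D) (uΛ : ℕ → ℝ → D)
    (hu : MemLp u p (volume.restrict (Set.Ioc 0 T)))
    (huΛ : ∀ n, MemLp (uΛ n) p (volume.restrict (Set.Ioc 0 T)))
    (hconv : Tendsto (fun n => eLpNorm (fun t => uΛ n t - u t) p
        (volume.restrict (Set.Ioc 0 T))) atTop (nhds 0)) :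
    Tendsto (fun n => eLpNorm (fun t => opLin A T n t (uΛ n t) - A t (u t)) p
        (volume.restrict (Set.Ioc 0 T))) atTop (nhds 0) :=
  opLin_apply_tendsto_Lp_general T hT A hmeas C hbd p hp1 hp u uΛ hu huΛ hconv

end
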